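/- arXiv:1511.03678 — 4 statements merged into one kernel-verified Lean document; each statement's English description precedes it below -/
import Mathlib

section
/- If F is a free group and α, β ∈ F commute with each other, then there exists ω ∈ F and integers m, m' such that α = ω^m and β = ω^{m'}. -/
/-!
The subgroup generated by two commuting elements of a free group is abelian, and free by
Nielsen–Schreier. An abelian free group has at most one generator, since two distinct generators
could be sent to non-commuting transpositions of `Fin 3`. Hence that subgroup is cyclic, and any
generator of it is a common root of both elements.
-/

theorem FreeGroup.isCyclic_of_subsingleton {α : Type*} [Subsingleton α] :
    IsCyclic (FreeGroup α) := by
  cases isEmpty_or_nonempty α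
  · infer_instance
  · have : Unique α := uniqueOfSubsingleton (Classical.arbitrary α)
    infer_instance

namespace IsFreeGroup

variable {G : Type*} [Group G] [IsFreeGroup G] [IsMulCommutative G]

theorem subsingleton_generators : Subsingleton (Generators G) := by
  refine ⟨fun x y => by_contra fun hxy => ?_⟩
  classical
  let f : Generators G → Equiv.Perm (Fin 3) := fun z =>
    if z = x then Equiv.swap 0 1 else Equiv.swap 0 2
  have hcomm := congrArg (lift f) (mul_comm' (of x) (of y))
  simp only [map_mul, lift_of, f, if_neg (Ne.symm hxy)] at hcomm
  exact absurd hcomm (by decide)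

theorem isCyclic_of_isMulCommutative : IsCyclic G :=
  have := subsingleton_generators (G := G)
  (mulEquiv G).isCyclic.mp FreeGroup.isCyclic_of_subsingleton

end IsFreeGroup

/-- If `a` and `b` are commuting elements of a free group, then they are both
powers of a common element `ω`. -/
theorem free_group_commute_common_power {α : Type*} (a b : FreeGroup α)
    (h : a * b = b * a) :
    ∃ (ω : FreeGroup α) (m m' : ℤ), a = ω ^ m ∧ b = ω ^ m' := by
  set H := Subgroup.closure ({a, b} : Set (FreeGroup α))
  have : IsMulCommutative H := Subgroup.isMulCommutative_closure (by
    simp only [Set.mem_insert_iff, Set.mem_singleton_iff]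
    rintro x (rfl | rfl) y (rfl | rfl) <;> first | rfl | exact h | exact h.symm)
  obtain ⟨ω, hω⟩ := (IsFreeGroup.isCyclic_of_isMulCommutative (G := H)).exists_generator
  obtain ⟨m, hm⟩ := Subgroup.mem_zpowers_iff.mp (hω ⟨a, Subgroup.subset_closure (by simp)⟩)
  obtain ⟨m', hm'⟩ := Subgroup.mem_zpowers_iff.mp (hω ⟨b, Subgroup.subset_closure (by simp)⟩)
  exact ⟨ω, m, m', congrArg Subtype.val hm.symm, congrArg Subtype.val hm'.symm⟩
end

section
/- Let w be a nontrivial reduced word in a free group. If for integers m, m' the reduced forms of w^m and w^{m'} have equal length, then m = m' or m = -m'. -/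
/-!
Write the reduced word of `w` as `u ++ c ++ invRev u` with `c` cyclically reduced; `c` is
nonempty because `w ≠ 1`. The reduced word of `w ^ (n + 1)` is then `u ++ c ^ (n + 1) ++ invRev u`,
of length `2 |u| + (n + 1) |c|`, so the length of `w ^ n` is strictly increasing in `n : ℕ`.
As `w ^ (-n)` has the same length as `w ^ n`, the length of `w ^ m` determines `|m|`.
-/

namespace FreeGroup

open reduceCyclically

variable {α : Type*} [DecidableEq α]

theorem reduceCyclically_toWord_ne_nil {w : FreeGroup α} (hw : w ≠ 1) :
    reduceCyclically w.toWord ≠ [] := by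
  intro h
  apply hw
  have := congr_arg mk (conj_conjugator_reduceCyclically w.toWord)
  rwa [h, List.append_nil, ← mul_mk, ← inv_mk, mul_inv_cancel, mk_toWord, eq_comm] at this

theorem norm_pow_succ (w : FreeGroup α) (n : ℕ) :
    (w ^ (n + 1)).norm =
      2 * (conjugator w.toWord).length + (n + 1) * (reduceCyclically w.toWord).length := by
  rw [norm, toWord_pow, reduce_flatten_replicate_succ isReduced_toWord]
  simp only [List.length_append, invRev_length, List.length_flatten, List.map_replicate,
    List.sum_replicate, smul_eq_mul]
  ring

theorem strictMono_norm_pow {w : FreeGroup α} (hw : w ≠ 1) :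
    StrictMono fun n : ℕ => (w ^ n).norm := by
  have hc := List.length_pos_iff.2 (reduceCyclically_toWord_ne_nil hw)
  refine strictMono_nat_of_lt_succ fun n => ?_
  cases n with
  | zero => simpa [Nat.pos_iff_ne_zero, norm_eq_zero] using hw
  | succ n => simp only [norm_pow_succ]; nlinarith

theorem norm_zpow_eq_norm_pow_natAbs (w : FreeGroup α) (k : ℤ) :
    (w ^ k).norm = (w ^ k.natAbs).norm := by
  rcases Int.natAbs_eq k with hk | hk <;> rw [hk]
  · rw [zpow_natCast, Int.natAbs_natCast]
  · rw [zpow_neg, norm_inv_eq, zpow_natCast, Int.natAbs_neg, Int.natAbs_natCast]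

end FreeGroup

/-- If `w` is a nontrivial element of a free group and the reduced forms of
`w ^ m` and `w ^ m'` have equal length, then `m = ± m'`. -/
theorem norm_pow_eq_iff {α : Type*} [DecidableEq α] (w : FreeGroup α) (hw : w ≠ 1)
    (m m' : ℤ) (h : (w ^ m).norm = (w ^ m').norm) :
    m = m' ∨ m = -m' := by
  rw [FreeGroup.norm_zpow_eq_norm_pow_natAbs, FreeGroup.norm_zpow_eq_norm_pow_natAbs] at h
  exact Int.natAbs_eq_natAbs_iff.1 ((FreeGroup.strictMono_norm_pow hw).injective h)
end

section
/- For any graph G, three times the girth of G is at most the abelian girth of G: 3·girth(G) ≤ Abl(G). -/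
/-- A multigraph: vertices, edges, and tail/head maps (loops and parallel
edges allowed). -/
structure MGraph where
  V : Type
  E : Type
  tail : E → V
  head : E → V

namespace MGraph

variable (G : MGraph)

/-- Directed edges: an edge together with an orientation. -/
abbrev Dir := G.E × Bool

/-- The tail of a directed edge. -/
def dtail : G.Dir → G.V := fun d => if d.2 then G.tail d.1 else G.head d.1

/-- The head of a directed edge. -/
def dhead : G.Dir → G.V := fun d => if d.2 then G.head d.1 else G.tail d.1

/-- The inverse (reversal) of a directed edge. -/
def dinv : G.Dir → G.Dir := fun d => (d.1, !d.2)

/-- A walk is a list of directed edges in which the head of each directed edge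
is the tail of the next one. -/
def IsWalk (w : List G.Dir) : Prop :=
  w.Chain' (fun a b => G.dhead a = G.dtail b)

/-- A walk is non-backtracking if no directed edge is immediately followed by
its inverse. -/
def NonBack (w : List G.Dir) : Prop :=
  w.Chain' (fun a b => b ≠ G.dinv a)

/-- The starting vertex of a (nonempty) walk. -/
def wstart (w : List G.Dir) : Option G.V := w.head?.map G.dtail

/-- The terminating vertex of a (nonempty) walk. -/
def wend (w : List G.Dir) : Option G.V := w.getLast?.map G.dhead

/-- A walk is closed if it is nontrivial and its endpoints coincide. -/
def Closed (w : List G.Dir) : Prop := w ≠ [] ∧ G.wstart w = G.wend w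

/-- The number of times the directed edge `d` is traversed by the walk `w`. -/
noncomputable def cnt (w : List G.Dir) (d : G.Dir) : ℕ :=
  letI := Classical.decEq G.Dir
  w.count d

/-- A walk is edge neutral if it traverses each edge the same number of times
in each direction. -/
def EdgeNeutral (w : List G.Dir) : Prop :=
  ∀ e : G.E, G.cnt w (e, true) = G.cnt w (e, false)

/-- The girth: the minimal length of a nontrivial closed non-backtracking
walk (`⊤` if none exists). -/
noncomputable def girth : ℕ∞ :=
  sInf {n : ℕ∞ | ∃ w : List G.Dir,
    G.IsWalk w ∧ G.NonBack w ∧ G.Closed w ∧ n = w.length}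

/-- The abelian girth: the minimal length of a nontrivial closed
non-backtracking edge-neutral walk (`⊤` if none exists). -/
noncomputable def ablGirth : ℕ∞ :=
  sInf {n : ℕ∞ | ∃ w : List G.Dir,
    G.IsWalk w ∧ G.NonBack w ∧ G.Closed w ∧ G.EdgeNeutral w ∧ n = w.length}

/-- The degree of a vertex: the number of directed edges with tail `v`
(so a loop contributes 2). -/
noncomputable def deg (v : G.V) : ℕ := Nat.card {d : G.Dir // G.dtail d = v}

/-- Adjacency via a directed edge. -/
def adj (u v : G.V) : Prop := ∃ d : G.Dir, G.dtail d = u ∧ G.dhead d = v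

/-- A graph is connected if it is nonempty and any two vertices are joined by
a walk. -/
def Connected : Prop :=
  Nonempty G.V ∧ ∀ u v : G.V, Relation.ReflTransGen G.adj u v

/-- The Euler characteristic `|V| - |E|`. -/
noncomputable def eulerChar : ℤ := (Nat.card G.V : ℤ) - (Nat.card G.E : ℤ)

/-- A walk traverses each edge at most once (in either direction). -/
def EdgesDistinct (w : List G.Dir) : Prop :=
  ∀ e : G.E, G.cnt w (e, true) + G.cnt w (e, false) ≤ 1

/-- The edge `e` occurs in the walk `w` (in some direction). -/
def edgeIn (w : List G.Dir) (e : G.E) : Prop := (e, true) ∈ w ∨ (e, false) ∈ w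

/-- The vertex `x` is visited by the walk `w`. -/
def vtxIn (w : List G.Dir) (x : G.V) : Prop :=
  (∃ d ∈ w, G.dtail d = x) ∨ (∃ d ∈ w, G.dhead d = x)

/-- A cycle based at `v`: a nontrivial strongly closed non-backtracking walk
from `v` to `v` traversing each edge at most once. -/
def IsCycleAt (v : G.V) (w : List G.Dir) : Prop :=
  G.IsWalk w ∧ G.NonBack w ∧ G.wstart w = some v ∧ G.wend w = some v ∧
    G.EdgesDistinct w ∧
    (∀ a b : G.Dir, w.head? = some a → w.getLast? = some b → a ≠ G.dinv b)

/-- A path from `u` to `v`: a non-backtracking walk from `u` to `v`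
traversing each edge at most once. -/
def IsPathBetween (u v : G.V) (w : List G.Dir) : Prop :=
  G.IsWalk w ∧ G.NonBack w ∧ G.wstart w = some u ∧ G.wend w = some v ∧
    G.EdgesDistinct w

/-- One elementary reduction step on a walk: deleting a reversal, i.e. an
adjacent pair consisting of a directed edge and its inverse. -/
def RStep (w w' : List G.Dir) : Prop :=
  ∃ (pre suf : List G.Dir) (d : G.Dir),
    w = pre ++ d :: G.dinv d :: suf ∧ w' = pre ++ suf

end MGraph

/-!
Cyclically reduce a closed non-backtracking edge-neutral walk (if its first edge is the inverse
of its last, delete both and induct) and read it as a non-backtracking sequence `f` of period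
`m` in which the inverse of every entry occurs within the next period. Pick mutually inverse
entries `f 0`, `f (l + 1)` at minimal distance. Then `f 1, …, f l` is a closed walk, so
`girth ≤ l`, and all inverse pairs are at cyclic distance `> l`. Let `p₁`, `pₗ` be the positions
of the inverses of `f 1`, `f l`. If `p₁ < pₗ`, the inverse pairs `(0, l + 1)`, `(1, p₁)`,
`(l, pₗ)` cross pairwise, and splicing along consecutive pairs cuts the cycle into three
closed non-backtracking walks of total length `m`. Otherwise the distance bounds force
`m ≥ 3 l + 1`.
-/

namespace MGraph

variable {G : MGraph}

@[simp] lemma dinv_dinv (d : G.Dir) : G.dinv (G.dinv d) = d := by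
  simp [dinv]

lemma dinv_ne_self (d : G.Dir) : G.dinv d ≠ d := by
  simp [dinv, Prod.ext_iff]

@[simp] lemma dtail_dinv (d : G.Dir) : G.dtail (G.dinv d) = G.dhead d := by
  rcases d with ⟨e, _ | _⟩ <;> rfl

@[simp] lemma dhead_dinv (d : G.Dir) : G.dhead (G.dinv d) = G.dtail d := by
  rcases d with ⟨e, _ | _⟩ <;> rfl

variable (G) in
def NBStep (x y : G.Dir) : Prop := G.dhead x = G.dtail y ∧ y ≠ G.dinv x

lemma nbStep_dinv_dinv {x y : G.Dir} : G.NBStep (G.dinv y) (G.dinv x) ↔ G.NBStep x y := by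
  simp only [NBStep, dhead_dinv, dtail_dinv, ne_eq]
  constructor <;> rintro ⟨h₁, h₂⟩ <;> exact ⟨h₁.symm, fun h ↦ h₂ (by simp [h])⟩

lemma isWalk_and_nonBack_iff {w : List G.Dir} :
    G.IsWalk w ∧ G.NonBack w ↔ w.IsChain G.NBStep := by
  show w.IsChain _ ∧ w.IsChain _ ↔ _
  simp only [List.isChain_iff_getElem, NBStep, ← forall_and]

lemma closed_iff_of_ne_nil {w : List G.Dir} (hne : w ≠ []) :
    G.Closed w ↔ G.dtail (w.head hne) = G.dhead (w.getLast hne) := by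
  simp [Closed, wstart, wend, hne, List.head?_eq_some_head hne,
    List.getLast?_eq_some_getLast hne]

lemma girth_le_of_nbStep {f : ℕ → G.Dir} {a b : ℕ} (hab : a ≤ b)
    (hstep : ∀ i, a ≤ i → i < b → G.NBStep (f i) (f (i + 1)))
    (hclosed : G.dtail (f a) = G.dhead (f b)) : G.girth ≤ (b + 1 - a : ℕ) := by
  set w := (List.range' a (b + 1 - a)).map f
  have hne : w ≠ [] :=
    List.ne_nil_of_length_pos (by simp only [w, List.length_map, List.length_range']; omega)
  have hchain : w.IsChain G.NBStep := by
    refine List.isChain_iff_getElem.mpr fun i hi ↦ ?_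
    simp only [w, List.length_map, List.length_range'] at hi
    simpa [w, add_assoc] using hstep (a + i) (by omega) (by omega)
  obtain ⟨hW, hN⟩ := isWalk_and_nonBack_iff.mpr hchain
  refine sInf_le ⟨w, hW, hN, (closed_iff_of_ne_nil hne).mpr ?_, by simp [w]⟩
  simpa [w, List.getLast_map, List.getLast_range', show a + (b + 1 - a) - 1 = b by omega]
    using hclosed

/-- Inverse pairs `f c = (f a)⁻¹` and `f d = (f b)⁻¹` with `a < b ≤ c < d` yield the closed
walk `f a, …, f b, (f (d - 1))⁻¹, …, (f (c + 1))⁻¹`. -/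
lemma girth_le_of_crossing {f : ℕ → G.Dir} {a b c d : ℕ}
    (hstep : ∀ i, a ≤ i → i < d → G.NBStep (f i) (f (i + 1)))
    (hab : a < b) (hbc : b ≤ c) (hcd : c < d)
    (hac : f c = G.dinv (f a)) (hbd : f d = G.dinv (f b)) :
    G.girth ≤ (b - a + (d - c) : ℕ) := by
  set g : ℕ → G.Dir := fun i ↦ if i ≤ b then f i else G.dinv (f (b + d - i))
  have hback : ∀ j, c < j → j < d → G.NBStep (G.dinv (f (j + 1))) (G.dinv (f j)) :=
    fun j hcj hjd ↦ nbStep_dinv_dinv.mpr (hstep j (by omega) hjd)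
  have hturn : G.NBStep (f b) (G.dinv (f (d - 1))) := by
    have h := hstep (d - 1) (by omega) (by omega)
    rw [Nat.sub_add_cancel (by omega), hbd] at h
    simpa using nbStep_dinv_dinv.mpr h
  have hreturn : G.dtail (f a) = G.dtail (f (c + 1)) := by
    rw [← (hstep c (by omega) hcd).1, hac, dhead_dinv]
  convert girth_le_of_nbStep (f := g) (a := a) (b := b + (d - c) - 1) (by omega) ?_ ?_
    using 2
  · omega
  · intro i hai hib
    rcases lt_trichotomy i b with hi | hi | hi
    · simpa [g, hi.le, Nat.succ_le_of_lt hi] using hstep i hai (by omega)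
    · simpa [g, hi, show b + d - (b + 1) = d - 1 by omega] using hturn
    · simpa [g, show ¬ i ≤ b by omega, show ¬ i < b by omega,
        show b + d - i = b + d - (i + 1) + 1 by omega]
        using hback (b + d - (i + 1)) (by omega) (by omega)
  · rcases Nat.lt_or_ge (c + 1) d with hcd' | hcd'
    · simp [g, hab.le, show ¬ b + (d - c) - 1 ≤ b by omega,
        show b + d - (b + (d - c) - 1) = c + 1 by omega, hreturn]
    · simp only [g, hab.le, show b + (d - c) - 1 = b by omega, le_refl, if_true]
      rw [hreturn, show c + 1 = d by omega, hbd, dtail_dinv]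

section Periodic

variable {f : ℕ → G.Dir} {m l : ℕ}

lemma inverse_pair_bounds (hper : Function.Periodic f m)
    (hmin : ∀ i j, i < j → f j = G.dinv (f i) → l + 1 ≤ j - i)
    {z p : ℕ} (hzp : z < p) (hpz : p < z + m) (hp : f p = G.dinv (f z)) :
    z + l + 1 ≤ p ∧ p + l + 1 ≤ z + m := by
  have hwrap : f (z + m) = G.dinv (f p) := by rw [hper, hp, dinv_dinv]
  have h₁ := hmin z p hzp hp
  have h₂ := hmin p (z + m) hpz hwrap
  omega

lemma three_mul_girth_le_of_minimal_inverse_pair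
    (hstep : ∀ i, G.NBStep (f i) (f (i + 1))) (hper : Function.Periodic f m)
    (hinv : ∀ i, ∃ j, i < j ∧ j < i + m ∧ f j = G.dinv (f i))
    (hpair : f (l + 1) = G.dinv (f 0))
    (hmin : ∀ i j, i < j → f j = G.dinv (f i) → l + 1 ≤ j - i) :
    3 * G.girth ≤ m := by
  have hl : 1 ≤ l := by
    by_contra! h
    obtain rfl : l = 0 := by omega
    exact (hstep 0).2 hpair
  have hgirth : G.girth ≤ l := by
    have hclosed : G.dtail (f 1) = G.dhead (f l) := by
      rw [(hstep l).1, hpair, dtail_dinv, ← (hstep 0).1]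
    simpa using girth_le_of_nbStep hl (fun i _ _ ↦ hstep i) hclosed
  obtain ⟨p₁, h1p₁, hp₁m, hp₁⟩ := hinv 1
  obtain ⟨pₗ, hlpₗ, hpₗm, hpₗ⟩ := hinv l
  have hb₁ := inverse_pair_bounds hper hmin h1p₁ hp₁m hp₁
  have hbₗ := inverse_pair_bounds hper hmin hlpₗ hpₗm hpₗ
  by_cases hcross : 2 ≤ l ∧ p₁ < pₗ
  · have hwrap : f m = G.dinv (f (l + 1)) := by
      rw [← zero_add m, hper, hpair, dinv_dinv]
    have g₁ := girth_le_of_crossing (fun i _ _ ↦ hstep i) (a := 0) (b := 1) (c := l + 1)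
      (d := p₁) (by omega) (by omega) (by omega) hpair hp₁
    have g₂ := girth_le_of_crossing (fun i _ _ ↦ hstep i) (a := 1) (b := l) (c := p₁)
      (d := pₗ) (by omega) (by omega) (by omega) hp₁ hpₗ
    have g₃ := girth_le_of_crossing (fun i _ _ ↦ hstep i) (a := l) (b := l + 1) (c := pₗ)
      (d := m) (by omega) (by omega) (by omega) hpₗ hwrap
    calc 3 * G.girth = G.girth + G.girth + G.girth := by ring
      _ ≤ ((1 - 0 + (p₁ - (l + 1)) : ℕ) : ℕ∞) + ((l - 1 + (pₗ - p₁) : ℕ) : ℕ∞)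
          + ((l + 1 - l + (m - pₗ) : ℕ) : ℕ∞) := add_le_add (add_le_add g₁ g₂) g₃
      _ = m := by norm_cast; omega
  · calc 3 * G.girth ≤ 3 * (l : ℕ∞) := mul_le_mul_right hgirth 3
      _ ≤ m := by norm_cast; omega

lemma three_mul_girth_le_of_periodic
    (hstep : ∀ i, G.NBStep (f i) (f (i + 1))) (hper : Function.Periodic f m)
    (hinv : ∀ i, ∃ j, i < j ∧ j < i + m ∧ f j = G.dinv (f i)) :
    3 * G.girth ≤ m := by
  classical
  have hex : ∃ n k, f (k + (n + 1)) = G.dinv (f k) := by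
    obtain ⟨j, hj, -, hfj⟩ := hinv 0
    exact ⟨j - 1, 0, by simpa [Nat.sub_add_cancel hj] using hfj⟩
  obtain ⟨k, hk⟩ := Nat.find_spec hex
  refine three_mul_girth_le_of_minimal_inverse_pair (f := fun i ↦ f (k + i))
    (fun i ↦ hstep (k + i)) (hper.const_add k) (fun i ↦ ?_)
    (by simpa using hk) (fun i j hij hj ↦ ?_)
  · obtain ⟨j, hij, hjm, hj⟩ := hinv (k + i)
    exact ⟨j - k, by omega, by omega, by rwa [Nat.add_sub_cancel' (by omega)]⟩
  · have := Nat.find_min' hex (m := j - i - 1)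
      ⟨k + i, by rwa [show k + i + (j - i - 1 + 1) = k + j by omega]⟩
    omega

end Periodic

lemma cnt_pos_iff {w : List G.Dir} {d : G.Dir} : 0 < G.cnt w d ↔ d ∈ w := by
  let _ : DecidableEq G.Dir := Classical.decEq G.Dir
  exact List.count_pos_iff

lemma EdgeNeutral.dinv_mem {w : List G.Dir} (hE : G.EdgeNeutral w) {d : G.Dir} (hd : d ∈ w) :
    G.dinv d ∈ w := by
  rw [← cnt_pos_iff] at hd ⊢
  rcases d with ⟨e, _ | _⟩
  · simpa [dinv, hE e] using hd
  · simpa [dinv, ← hE e] using hd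

lemma edgeNeutral_cons_append_dinv {x : G.Dir} {u : List G.Dir} :
    G.EdgeNeutral (x :: (u ++ [G.dinv x])) ↔ G.EdgeNeutral u := by
  refine forall_congr' fun e ↦ ?_
  rcases x with ⟨e', _ | _⟩ <;> by_cases he : e' = e <;>
    simp [cnt, dinv, List.count_append, he]

lemma isChain_and_closed_of_cons_append_dinv {x : G.Dir} {u : List G.Dir}
    (hchain : (x :: (u ++ [G.dinv x])).IsChain G.NBStep) :
    u.IsChain G.NBStep ∧ G.Closed u := by
  rw [List.isChain_cons, List.isChain_append] at hchain
  obtain ⟨hfirst, hu, -, hlast⟩ := hchain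
  have hne : u ≠ [] := by
    rintro rfl
    exact (hfirst _ rfl).2 rfl
  refine ⟨hu, (closed_iff_of_ne_nil hne).mpr ?_⟩
  have h₁ := (hfirst (u.head hne) (by simp [List.head?_eq_some_head hne])).1
  have h₂ := (hlast (u.getLast hne) (List.getLast?_eq_some_getLast hne) _ rfl).1
  rw [← h₁, h₂, dtail_dinv]

lemma three_mul_girth_le_length_of_cyclic {w : List G.Dir} (hne : w ≠ [])
    (hchain : w.IsChain G.NBStep) (hcyc : G.NBStep (w.getLast hne) (w.head hne))
    (hE : G.EdgeNeutral w) : 3 * G.girth ≤ w.length := by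
  have hpos : 0 < w.length := List.length_pos_iff.mpr hne
  set f : ℕ → G.Dir := fun i ↦ w[i % w.length]'(Nat.mod_lt _ hpos)
  have hper : Function.Periodic f w.length := fun i ↦ by simp [f]
  have hrot : ∀ i t (ht : t < (w.rotate i).length), (w.rotate i)[t] = f (i + t) := by
    intro i t ht
    simp [f, List.getElem_rotate, add_comm]
  refine three_mul_girth_le_of_periodic (f := f) (fun i ↦ ?_) hper (fun i ↦ ?_)
  · have hsucc : f (i + 1) = f (i % w.length + 1) := by
      rw [← hper.map_mod_nat (i % w.length + 1), Nat.mod_add_mod, hper.map_mod_nat]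
    rw [← hper.map_mod_nat i, hsucc]
    have hi := Nat.mod_lt i hpos
    rcases Nat.lt_or_ge (i % w.length + 1) w.length with h | h
    · simpa [f, Nat.mod_eq_of_lt h, Nat.mod_eq_of_lt hi] using hchain.getElem _ h
    · rw [show i % w.length = w.length - 1 by omega, Nat.sub_add_cancel hpos]
      simpa [f, List.getLast_eq_getElem, List.head_eq_getElem] using hcyc
  · have hmem : G.dinv (f i) ∈ w.rotate i :=
      List.mem_rotate.mpr (hE.dinv_mem (List.getElem_mem _))
    obtain ⟨t, ht, hft⟩ := List.getElem_of_mem hmem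
    rw [hrot] at hft
    have ht0 : t ≠ 0 := by
      rintro rfl
      exact dinv_ne_self _ hft.symm
    exact ⟨i + t, by omega, by simpa using ht, hft⟩

lemma three_mul_girth_le_length {w : List G.Dir} (hchain : w.IsChain G.NBStep)
    (hC : G.Closed w) (hE : G.EdgeNeutral w) : 3 * G.girth ≤ w.length := by
  induction hn : w.length using Nat.strong_induction_on generalizing w with
  | _ n ih =>
    by_cases hback : w.head hC.1 = G.dinv (w.getLast hC.1)
    · obtain ⟨x, t, rfl⟩ := List.exists_cons_of_ne_nil hC.1
      rcases List.eq_nil_or_concat' t with rfl | ⟨u, y, rfl⟩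
      · exact absurd hback.symm (dinv_ne_self x)
      obtain rfl : y = G.dinv x := by rw [show x = G.dinv y by simpa using hback, dinv_dinv]
      obtain ⟨hu, hCu⟩ := isChain_and_closed_of_cons_append_dinv hchain
      have hlen : u.length + 2 = n := by simpa using hn
      calc 3 * G.girth ≤ u.length :=
            ih u.length (by omega) hu hCu (edgeNeutral_cons_append_dinv.mp hE) rfl
        _ ≤ n := by exact_mod_cast (by omega : u.length ≤ n)
    · exact hn ▸ three_mul_girth_le_length_of_cyclic hC.1 hchain
        ⟨((closed_iff_of_ne_nil hC.1).mp hC).symm, hback⟩ hE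

end MGraph

/-- Three times the girth of a graph is at most its abelian girth. -/
theorem three_mul_girth_le_ablGirth (G : MGraph) :
    3 * G.girth ≤ G.ablGirth :=
  le_sInf fun _ ⟨_, hW, hN, hC, hE, hn⟩ ↦
    hn ▸ G.three_mul_girth_le_length (MGraph.isWalk_and_nonBack_iff.mp ⟨hW, hN⟩) hC hE
end

section
/- If a graph G has three pairwise distinct closed non-backtracking walks of the same length l based at a common vertex, then Abl(G) ≤ 4l. -/
/-! Closed walks at `v` are words in the free group on the edges, and free reduction keeps a
walk a walk with the same endpoints. Among three distinct words of length `l`, two, `u` and `w`,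
are neither equal nor mutually inverse. Equal-length reduced words that commute in a free group
are equal or inverse, so the commutator `u w u⁻¹ w⁻¹` is nontrivial; its reduced word is then a
nonempty non-backtracking closed walk of length at most `4l`, and it is edge neutral because
every exponent-sum homomorphism kills commutators. -/

open scoped commutatorElement

theorem List.eq_of_isPrefix_of_isSuffix {α : Type*} {l₁ l₂ p q : List α}
    (hp₁ : p <+: l₁) (hp₂ : p <+: l₂) (hq₁ : q <:+ l₁) (hq₂ : q <:+ l₂)
    (hl : l₁.length = l₂.length) (hpq : l₁.length ≤ p.length + q.length) : l₁ = l₂ := by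
  refine List.ext_getElem hl fun i h₁ h₂ => ?_
  by_cases hi : i < p.length
  · rw [← hp₁.getElem hi, ← hp₂.getElem hi]
  · have hj : i - (l₁.length - q.length) < q.length := by omega
    have e₁ := hq₁.getElem hj
    have e₂ := hq₂.getElem hj
    simp only [← hl, show l₁.length - q.length + (i - (l₁.length - q.length)) = i by omega]
      at e₁ e₂
    rw [← e₁, ← e₂]

namespace FreeGroup

variable {α : Type*} [DecidableEq α]

theorem IsReduced.toWord_mk {w : List (α × Bool)} (h : IsReduced w) : (mk w).toWord = w := by
  rw [FreeGroup.toWord_mk, h.reduce_eq]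

theorem IsReduced.norm_mk {w : List (α × Bool)} (h : IsReduced w) : (mk w).norm = w.length := by
  rw [norm, h.toWord_mk]

theorem IsReduced.exists_reduce_append_eq {u v : List (α × Bool)} (hu : IsReduced u)
    (hv : IsReduced v) :
    ∃ p s q, u = p ++ s ∧ v = invRev s ++ q ∧ reduce (u ++ v) = p ++ q := by
  induction v generalizing u with
  | nil => exact ⟨u, [], [], by simp, by simp [invRev], by simpa using hu.reduce_eq⟩
  | cons y v ih =>
    rcases u.eq_nil_or_concat' with rfl | ⟨u, x, rfl⟩
    · exact ⟨[], [], y :: v, rfl, by simp [invRev], hv.reduce_eq⟩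
    by_cases hxy : y = (x.1, !x.2)
    · subst hxy
      obtain ⟨p, s, q, rfl, rfl, hred⟩ :=
        ih (hu.infix (List.infix_append_left ..)) (hv.infix (List.suffix_cons ..).isInfix)
      refine ⟨p, s ++ [x], q, by simp, by simp [invRev], ?_⟩
      rw [← hred, ← reduce.Step.eq (Red.Step.not (L₁ := p ++ s) (x := x.1) (b := x.2))]
      simp
    · refine ⟨u ++ [x], [], y :: v, by simp, by simp [invRev], IsReduced.reduce_eq ?_⟩
      refine hu.append_overlap (L₂ := [x]) (isReduced_cons_cons.mpr ⟨fun h => ?_, hv⟩)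
        (List.cons_ne_nil _ _)
      by_contra h'
      exact hxy (Prod.ext h.symm (Bool.eq_not.mpr (Ne.symm h')))

/- Write `u = p s`, `v = s⁻¹ q` and `v = p' s'`, `u = s'⁻¹ q'` for the cancellations in `u v` and
`v u`. Equal lengths force `p = p'` and `q = q'`; then `u` and `v` share the prefix `p` and the
suffix `q`, while `u` and `v⁻¹` share the prefix `s'⁻¹` and the suffix `s`, and one of the two
pairs covers the whole word. -/
theorem eq_or_eq_inv_of_commute {x y : FreeGroup α} (h : Commute x y) (hn : x.norm = y.norm) :
    x = y ∨ x = y⁻¹ := by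
  obtain ⟨p, s, q, hu, hv, hxy⟩ :=
    isReduced_toWord.exists_reduce_append_eq (isReduced_toWord (x := y))
  obtain ⟨p', s', q', hv', hu', hyx⟩ :=
    isReduced_toWord.exists_reduce_append_eq (isReduced_toWord (x := x))
  rw [← toWord_mul, h.eq, toWord_mul] at hxy
  unfold norm at hn
  have lu := congrArg List.length hu
  have lv := congrArg List.length hv
  have lu' := congrArg List.length hu'
  have lv' := congrArg List.length hv'
  have lpq := congrArg List.length (hxy.symm.trans hyx)
  simp only [List.length_append, invRev_length] at lu lv lu' lv' lpq
  obtain ⟨rfl, rfl⟩ := List.append_inj (hxy.symm.trans hyx) (by omega)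
  rcases le_total s.length p.length with hsp | hps
  · refine .inl (toWord_injective (List.eq_of_isPrefix_of_isSuffix (p := p) (q := q)
      ?_ ?_ ?_ ?_ hn (by omega)))
    · exact hu ▸ List.prefix_append _ _
    · exact hv' ▸ List.prefix_append _ _
    · exact hu' ▸ List.suffix_append _ _
    · exact hv ▸ List.suffix_append _ _
  · refine .inr (toWord_injective ?_)
    rw [toWord_inv]
    refine List.eq_of_isPrefix_of_isSuffix (p := invRev s') (q := s) ?_ ?_ ?_ ?_
      (by simp [hn]) (by simp; omega)
    · exact hu' ▸ List.prefix_append _ _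
    · rw [hv', invRev_append]; exact List.prefix_append _ _
    · exact hu ▸ List.suffix_append _ _
    · rw [hv, invRev_append, invRev_invRev]; exact List.suffix_append _ _

theorem not_commute_mk_of_ne_of_ne_invRev {u w : List (α × Bool)} (hu : IsReduced u)
    (hw : IsReduced w) (hl : u.length = w.length) (hne : u ≠ w) (hni : u ≠ invRev w) :
    ¬ Commute (mk u) (mk w) := fun h => by
  rcases eq_or_eq_inv_of_commute h (by rw [hu.norm_mk, hw.norm_mk, hl]) with h | h
  · exact hne (by rw [← hu.toWord_mk, ← hw.toWord_mk, h])
  · exact hni (by rw [← hu.toWord_mk, ← hw.toWord_mk, h, toWord_inv])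

theorem norm_commutatorElement_le (x y : FreeGroup α) : ⁅x, y⁆.norm ≤ 2 * (x.norm + y.norm) := by
  have h₁ := norm_mul_le (x * y * x⁻¹) y⁻¹
  have h₂ := norm_mul_le (x * y) x⁻¹
  have h₃ := norm_mul_le x y
  rw [norm_inv_eq] at h₁ h₂
  rw [commutatorElement_def]
  omega

def exponentSum (a : α) : FreeGroup α →* Multiplicative ℤ :=
  lift (Pi.mulSingle a (Multiplicative.ofAdd 1))

theorem toAdd_exponentSum_mk (a : α) (w : List (α × Bool)) :
    (exponentSum a (mk w)).toAdd = (w.count (a, true) : ℤ) - w.count (a, false) := by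
  induction w with
  | nil => simp [← one_eq_mk]
  | cons d w ih =>
    obtain ⟨x, b⟩ := d
    rw [← List.singleton_append, ← mul_mk, _root_.map_mul, toAdd_mul, ih]
    by_cases hx : x = a
    · subst hx
      cases b <;> simp [exponentSum] <;> ring
    · simp [exponentSum, hx]

end FreeGroup

namespace MGraph

open FreeGroup

/- Unlike `IsWalk` with `wstart` and `wend`, this also makes sense for the empty walk, so it is
preserved by free reduction. -/
def IsWalkBetween (G : MGraph) : G.V → G.V → List G.Dir → Prop
  | a, b, [] => a = b
  | a, b, d :: w => G.dtail d = a ∧ IsWalkBetween G (G.dhead d) b w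

variable {G : MGraph}

@[simp] lemma dtail_flip (e : G.E) (b : Bool) : G.dtail (e, !b) = G.dhead (e, b) := by
  cases b <;> rfl

@[simp] lemma dhead_flip (e : G.E) (b : Bool) : G.dhead (e, !b) = G.dtail (e, b) := by
  cases b <;> rfl

lemma isWalk_iff {w : List G.Dir} : G.IsWalk w ↔ w.IsChain fun a b => G.dhead a = G.dtail b :=
  Iff.rfl

lemma wend_cons_cons (d d' : G.Dir) (w : List G.Dir) :
    G.wend (d :: d' :: w) = G.wend (d' :: w) := by
  simp [wend, List.getLast?_cons_cons]

lemma nonBack_iff_isReduced {w : List G.Dir} : G.NonBack w ↔ IsReduced w := by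
  have : (fun a b : G.Dir => b ≠ G.dinv a) = fun a b => a.1 = b.1 → a.2 = b.2 := by
    ext ⟨e, b⟩ ⟨e', b'⟩
    cases b <;> cases b' <;> simp [dinv, eq_comm]
  exact Iff.of_eq (congrArg (List.IsChain · w) this)

lemma cnt_eq_count [DecidableEq G.E] (w : List G.Dir) (d : G.Dir) : G.cnt w d = w.count d := by
  unfold cnt
  congr
  exact lawful_beq_subsingleton _ _

lemma edgeNeutral_iff [DecidableEq G.E] {w : List G.Dir} :
    G.EdgeNeutral w ↔ ∀ e, exponentSum e (FreeGroup.mk w) = 1 := by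
  refine forall_congr' fun e => ?_
  rw [← toAdd_eq_zero, toAdd_exponentSum_mk, cnt_eq_count, cnt_eq_count, sub_eq_zero,
    Nat.cast_inj]

@[simp] lemma isWalkBetween_nil {a b : G.V} : G.IsWalkBetween a b [] ↔ a = b := Iff.rfl

@[simp] lemma isWalkBetween_cons {a b : G.V} {d : G.Dir} {w : List G.Dir} :
    G.IsWalkBetween a b (d :: w) ↔ G.dtail d = a ∧ G.IsWalkBetween (G.dhead d) b w := Iff.rfl

lemma isWalkBetween_append {a b : G.V} {u w : List G.Dir} :
    G.IsWalkBetween a b (u ++ w) ↔ ∃ c, G.IsWalkBetween a c u ∧ G.IsWalkBetween c b w := by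
  induction u generalizing a with
  | nil => simp
  | cons d u ih => simp [ih, and_assoc]

lemma IsWalkBetween.append {a b c : G.V} {u w : List G.Dir} (hu : G.IsWalkBetween a b u)
    (hw : G.IsWalkBetween b c w) : G.IsWalkBetween a c (u ++ w) :=
  isWalkBetween_append.mpr ⟨b, hu, hw⟩

lemma IsWalkBetween.invRev {a b : G.V} {w : List G.Dir} (h : G.IsWalkBetween a b w) :
    G.IsWalkBetween b a (invRev w) := by
  induction w generalizing a with
  | nil => exact h.symm
  | cons d w ih =>
    obtain ⟨rfl, hw⟩ := isWalkBetween_cons.mp h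
    rw [invRev_cons]
    exact (ih hw).append (by simp [FreeGroup.invRev])

lemma IsWalkBetween.red {a b : G.V} {w r : List G.Dir} (hr : Red w r)
    (h : G.IsWalkBetween a b w) : G.IsWalkBetween a b r := by
  induction hr with
  | refl => exact h
  | tail _ hstep ih =>
    cases hstep with
    | not =>
      obtain ⟨c, h₁, h₂⟩ := isWalkBetween_append.mp ih
      obtain ⟨rfl, h₃⟩ := by simpa using h₂
      exact h₁.append h₃

lemma isWalkBetween_iff {a b : G.V} {w : List G.Dir} (hw : w ≠ []) :
    G.IsWalkBetween a b w ↔ G.IsWalk w ∧ G.wstart w = some a ∧ G.wend w = some b := by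
  induction w generalizing a with
  | nil => exact absurd rfl hw
  | cons d w ih =>
    rcases w with _ | ⟨d', w⟩
    · simp [isWalk_iff, wstart, wend, eq_comm]
    · rw [isWalkBetween_cons, ih (List.cons_ne_nil _ _)]
      simp only [isWalk_iff, List.isChain_cons_cons, wstart, List.head?_cons,
        Option.map_some, Option.some.injEq, wend_cons_cons]
      grind

lemma isWalkBetween_of_isWalk {a b : G.V} {w : List G.Dir} (h : G.IsWalk w)
    (ha : G.wstart w = some a) (hb : G.wend w = some b) : G.IsWalkBetween a b w :=
  (isWalkBetween_iff (by rintro rfl; cases ha)).mpr ⟨h, ha, hb⟩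

theorem ablGirth_le_norm_mk [DecidableEq G.E] {v : G.V} {W : List G.Dir}
    (hW : G.IsWalkBetween v v W) (hne : FreeGroup.mk W ≠ 1)
    (hflow : ∀ e, exponentSum e (FreeGroup.mk W) = 1) :
    G.ablGirth ≤ (FreeGroup.mk W).norm := by
  have hr : (FreeGroup.mk W).toWord ≠ [] := toWord_eq_nil_iff.not.mpr hne
  have hwalk : G.IsWalkBetween v v (FreeGroup.mk W).toWord := by
    rw [toWord_mk]
    exact hW.red reduce.red
  obtain ⟨hw, hs, he⟩ := (isWalkBetween_iff hr).mp hwalk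
  refine sInf_le ⟨_, hw, nonBack_iff_isReduced.mpr isReduced_toWord, ⟨hr, hs.trans he.symm⟩,
    edgeNeutral_iff.mpr ?_, rfl⟩
  simpa only [mk_toWord] using hflow

theorem ablGirth_le_four_mul_of_ne_of_ne_invRev {v : G.V} {l : ℕ} {u w : List G.Dir}
    (hu : G.IsWalk u ∧ G.NonBack u ∧ G.wstart u = some v ∧ G.wend u = some v ∧ u.length = l)
    (hw : G.IsWalk w ∧ G.NonBack w ∧ G.wstart w = some v ∧ G.wend w = some v ∧ w.length = l)
    (hne : u ≠ w) (hni : u ≠ invRev w) :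
    G.ablGirth ≤ ((4 * l : ℕ) : ℕ∞) := by
  classical
  obtain ⟨huw, hur, hus, hue, rfl⟩ := hu
  obtain ⟨hww, hwr, hws, hwe, hl⟩ := hw
  rw [nonBack_iff_isReduced] at hur hwr
  have hcomm := not_commute_mk_of_ne_of_ne_invRev hur hwr hl.symm hne hni
  set W := u ++ w ++ invRev u ++ invRev w
  have hW : FreeGroup.mk W = ⁅FreeGroup.mk u, FreeGroup.mk w⁆ := by
    simp [W, commutatorElement_def, inv_mk, mul_mk]
  have hu' := isWalkBetween_of_isWalk huw hus hue
  have hw' := isWalkBetween_of_isWalk hww hws hwe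
  have hWalk : G.IsWalkBetween v v W := ((hu'.append hw').append hu'.invRev).append hw'.invRev
  have hflow (e : G.E) : exponentSum e (FreeGroup.mk W) = 1 := by
    rw [hW, map_commutatorElement, commutatorElement_eq_one_iff_commute]
    exact Commute.all _ _
  have hlen := norm_commutatorElement_le (FreeGroup.mk u) (FreeGroup.mk w)
  rw [hur.norm_mk, hwr.norm_mk, hl, ← hW] at hlen
  calc G.ablGirth ≤ (FreeGroup.mk W).norm :=
        ablGirth_le_norm_mk hWalk (by rwa [hW, Ne, commutatorElement_eq_one_iff_commute]) hflow
    _ ≤ ((4 * u.length : ℕ) : ℕ∞) := by exact_mod_cast hlen.trans_eq (by ring)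

end MGraph

/-- If a graph has three pairwise distinct closed non-backtracking walks of
the same length `l` based at a common vertex, then its abelian girth is at
most `4l`. -/
theorem ablGirth_le_four_l (G : MGraph) (v : G.V) (l : ℕ)
    (w₁ w₂ w₃ : List G.Dir)
    (hw₁ : G.IsWalk w₁ ∧ G.NonBack w₁ ∧ G.wstart w₁ = some v ∧
      G.wend w₁ = some v ∧ w₁.length = l)
    (hw₂ : G.IsWalk w₂ ∧ G.NonBack w₂ ∧ G.wstart w₂ = some v ∧
      G.wend w₂ = some v ∧ w₂.length = l)
    (hw₃ : G.IsWalk w₃ ∧ G.NonBack w₃ ∧ G.wstart w₃ = some v ∧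
      G.wend w₃ = some v ∧ w₃.length = l)
    (h12 : w₁ ≠ w₂) (h13 : w₁ ≠ w₃) (h23 : w₂ ≠ w₃) :
    G.ablGirth ≤ ((4 * l : ℕ) : ℕ∞) := by
  by_cases h : w₁ = FreeGroup.invRev w₂
  · refine G.ablGirth_le_four_mul_of_ne_of_ne_invRev hw₁ hw₃ h13 fun h' => h23 ?_
    exact FreeGroup.invRev_injective (h.symm.trans h')
  · exact G.ablGirth_le_four_mul_of_ne_of_ne_invRev hw₁ hw₂ h12 h
end
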